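/- Properties of the excitation-transport structure of the toric-code corrections: (a) for every non-starred generator j ∈ 𝒮 \ {p*, v*}, the correction anticommutes with its own stabilizer, C_j S_j = −S_j C_j; (b) for all j, k ∈ 𝒮 \ {p*, v*} with k ≠ j, if C_k S_j = −S_j C_k then f(k) ≥ f(j) + 1; (c) for every k ∈ 𝒮, there is at most one j ∈ 𝒮 with j ≠ k and C_k S_j = −S_j C_k (i.e., m = 1 for the toric code). -/

import Mathlib

/-! Every correction is a single-qubit Pauli `X_e` or `Z_e`, or the identity at the two starred
generators. Since `X_e` and `Z_f` anticommute exactly when `e = f`, and the four edges of a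
stabilizer are distinct once `L ≥ 2`, a correction anticommutes with a stabilizer of the opposite
type exactly when its edge lies on it. An edge lies on two plaquettes and on two vertices, and the
edge of `C_k` is chosen to lie on `k` and on the neighbour `k'` of `k` one step towards the starred
generator, so `C_k` anticommutes with `S_k` and `S_{k'}` only, and `f(k) = f(k') + 1`. -/

open scoped Matrix ComplexOrder

attribute [local instance] Matrix.normedAddCommGroup Matrix.normedSpace

namespace Toric

variable (L : ℕ) [NeZero L]

/-- Vertices of the periodic `L × L` lattice. -/
abbrev V := ZMod L × ZMod L

/-- Edges: `(v, 0)` is the horizontal edge from `v` to `v + (1,0)`,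
`(v, 1)` the vertical edge from `v` to `v + (0,1)`. -/
abbrev E := V L × Fin 2

/-- Operators on the `2L²` qubits: complex matrices indexed by `E → Fin 2`. -/
abbrev Op := Matrix (E L → Fin 2) (E L → Fin 2) ℂ

/-- Pauli `X` on edge `e`. -/
noncomputable def Xop (e : E L) : Op L := fun σ τ =>
  if τ e = 1 - σ e ∧ ∀ e' ≠ e, τ e' = σ e' then 1 else 0

/-- Pauli `Z` on edge `e`. -/
noncomputable def Zop (e : E L) : Op L :=
  Matrix.diagonal fun σ => (-1 : ℂ) ^ (σ e : ℕ)

/-- Vertex stabilizer at `v`. -/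
noncomputable def Sv (v : V L) : Op L :=
  Xop L (v, 0) * Xop L (v, 1) * Xop L (v - (1, 0), 0) * Xop L (v - (0, 1), 1)

/-- Plaquette stabilizer with south-west corner `v`. -/
noncomputable def Sp (v : V L) : Op L :=
  Zop L (v, 0) * Zop L (v, 1) * Zop L (v + (1, 0), 1) * Zop L (v + (0, 1), 0)

/-- Index set of stabilizer generators: `inl v` is the vertex generator at `v`,
`inr v` is the plaquette generator `p(v)`. -/
abbrev Gen := V L ⊕ V L

/-- The stabilizer associated with a generator index. -/
noncomputable def stab : Gen L → Op L
  | Sum.inl v => Sv L v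
  | Sum.inr v => Sp L v

/-- The starred vertex `v* = (1,1)`. -/
def vStar : Gen L := Sum.inl (1, 1)

/-- The starred plaquette `p* = p(0,0)`. -/
def pStar : Gen L := Sum.inr (0, 0)

/-- The correction operators. -/
noncomputable def corr : Gen L → Op L
  | Sum.inl (r, s) =>
      if (r, s) = ((1 : ZMod L), (1 : ZMod L)) then 1
      else if s ≠ 1 then Zop L ((r, s - 1), 1)
      else Zop L ((r - 1, 1), 0)
  | Sum.inr (r, s) =>
      if (r, s) = ((0 : ZMod L), (0 : ZMod L)) then 1
      else if s ≠ 0 then Xop L ((r, s + 1), 0)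
      else Xop L ((r + 1, 0), 1)

/-- `P_j^+ = (I + S_j)/2`. -/
noncomputable def Pplus (j : Gen L) : Op L := (2⁻¹ : ℂ) • (1 + stab L j)

/-- `P_j^- = (I - S_j)/2`. -/
noncomputable def Pminus (j : Gen L) : Op L := (2⁻¹ : ℂ) • (1 - stab L j)

/-- The correction channel `T_j(ρ) = P_j⁺ ρ P_j⁺ + C_j P_j⁻ ρ P_j⁻ C_j†` as a linear map. -/
noncomputable def Tj (j : Gen L) : Op L →ₗ[ℂ] Op L :=
  LinearMap.comp (LinearMap.mulLeft ℂ (Pplus L j)) (LinearMap.mulRight ℂ (Pplus L j)) +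
  LinearMap.comp (LinearMap.mulLeft ℂ (corr L j * Pminus L j))
    (LinearMap.mulRight ℂ (Pminus L j * (corr L j)ᴴ))

/-- The Liouvillian `L(ρ) = Σ_j (T_j(ρ) - ρ)`. -/
noncomputable def Liou : Op L →ₗ[ℂ] Op L :=
  ∑ j : Gen L, (Tj L j - LinearMap.id)

/-- The evolution `e^{tL}`. -/
noncomputable def expL (t : ℝ) : Op L →L[ℂ] Op L :=
  @NormedSpace.exp _ _ _ (@NonUnitalSeminormedRing.toIsTopologicalRing (Op L →L[ℂ] Op L)
    (@ContinuousLinearMap.toNormedRing ℂ (Op L) _ _ _).toNonUnitalNormedRing.toNonUnitalSeminormedRing)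
    ((t : ℂ) • (Liou L).toContinuousLinearMap)

/-- Product of a finite family of (commuting) operators, taken in some fixed enumeration order. -/
noncomputable def listProd {ι : Type*} [Fintype ι] (f : ι → Op L) : Op L :=
  ((Finset.univ : Finset ι).toList.map f).prod

/-- Logical `X̄₁`. -/
noncomputable def X1bar : Op L := listProd L fun s : ZMod L => Xop L ((0, s), 0)

/-- Logical `Z̄₁`. -/
noncomputable def Z1bar : Op L := listProd L fun r : ZMod L => Zop L ((r, 1), 0)

/-- Logical `X̄₂`. -/
noncomputable def X2bar : Op L := listProd L fun r : ZMod L => Xop L ((r, 0), 1)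

/-- Logical `Z̄₂`. -/
noncomputable def Z2bar : Op L := listProd L fun s : ZMod L => Zop L ((1, s), 1)

/-- The single-qubit Pauli matrices `I, X, Y, Z`. -/
noncomputable def pauli : Fin 4 → Matrix (Fin 2) (Fin 2) ℂ :=
  ![1, !![0, 1; 1, 0], !![0, -Complex.I; Complex.I, 0], !![1, 0; 0, -1]]

/-- Logical counterparts `Ī, X̄₁, Ȳ₁, Z̄₁` on the first logical qubit. -/
noncomputable def logical1 : Fin 4 → Op L :=
  ![1, X1bar L, Complex.I • (X1bar L * Z1bar L), Z1bar L]

/-- Logical counterparts `Ī, X̄₂, Ȳ₂, Z̄₂` on the second logical qubit. -/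
noncomputable def logical2 : Fin 4 → Op L :=
  ![1, X2bar L, Complex.I • (X2bar L * Z2bar L), Z2bar L]

/-- Logical counterpart `P̄ = P̄₁ P̄₂` of the two-qubit Pauli indexed by `(a, b)`. -/
noncomputable def logicalP (a b : Fin 4) : Op L := logical1 L a * logical2 L b

/-- `⟨Ψ| P₁ ⊗ P₂ |Ψ⟩` for the two-qubit Pauli indexed by `(a, b)`. -/
noncomputable def expval (Ψ : Fin 2 → Fin 2 → ℂ) (a b : Fin 4) : ℂ :=
  ∑ x : Fin 2, ∑ x' : Fin 2, ∑ y : Fin 2, ∑ y' : Fin 2,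
    (starRingEnd ℂ) (Ψ x y) * pauli a x x' * pauli b y y' * Ψ x' y'

/-- The qubit `A₁`. -/
def A1 : E L := (((0 : ZMod L), (1 : ZMod L)), 0)

/-- The qubit `A₂`. -/
def A2 : E L := (((1 : ZMod L), (0 : ZMod L)), 1)

/-- The qubits `B = {((0,s),0) : s ≠ 1}`. -/
def Bfin : Finset (E L) :=
  (Finset.univ.filter fun s : ZMod L => s ≠ 1).image fun s => (((0 : ZMod L), s), (0 : Fin 2))

/-- The qubits `C = {((r,1),0) : r ≠ 0}`. -/
def Cfin : Finset (E L) :=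
  (Finset.univ.filter fun r : ZMod L => r ≠ 0).image fun r => ((r, (1 : ZMod L)), (0 : Fin 2))

/-- The qubits `B' = {((r,0),1) : r ≠ 1}`. -/
def B'fin : Finset (E L) :=
  (Finset.univ.filter fun r : ZMod L => r ≠ 1).image fun r => ((r, (0 : ZMod L)), (1 : Fin 2))

/-- The qubits `C' = {((1,s),1) : s ≠ 0}`. -/
def C'fin : Finset (E L) :=
  (Finset.univ.filter fun s : ZMod L => s ≠ 0).image fun s => (((1 : ZMod L), s), (1 : Fin 2))

/-- The remaining qubits `D`. -/
def Dfin : Finset (E L) :=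
  Finset.univ \ ({A1 L, A2 L} ∪ Bfin L ∪ B'fin L ∪ Cfin L ∪ C'fin L)

/-- The initial state `ρ₀`: `|Ψ⟩⟨Ψ|` on `A₁A₂`, `|+⟩⟨+|` on `B ∪ B'`, `|0⟩⟨0|` on `C ∪ C'`,
and the arbitrary state `ρ_D` on the remaining qubits `D`. -/
noncomputable def rho0 (Ψ : Fin 2 → Fin 2 → ℂ)
    (ρD : Matrix ({e // e ∈ Dfin L} → Fin 2) ({e // e ∈ Dfin L} → Fin 2) ℂ) : Op L :=
  fun σ τ =>
    Ψ (σ (A1 L)) (σ (A2 L)) * (starRingEnd ℂ) (Ψ (τ (A1 L)) (τ (A2 L))) *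
    (∏ _e ∈ Bfin L ∪ B'fin L, (2⁻¹ : ℂ)) *
    (∏ e ∈ Cfin L ∪ C'fin L, if σ e = 0 ∧ τ e = 0 then (1 : ℂ) else 0) *
    ρD (fun d => σ d.1) (fun d => τ d.1)

/-- The projection `Q` onto the code space. -/
noncomputable def Qproj : Op L := listProd L fun j : Gen L => Pplus L j

/-- The projection `Q⊥ = I - Q` onto the orthogonal complement of the code space. -/
noncomputable def Qperp : Op L := 1 - Qproj L

end Toric

/-- The trace norm `‖A‖₁ = tr √(AᴴA)`. -/
noncomputable def traceNorm {m : Type*} [Fintype m] [DecidableEq m] (A : Matrix m m ℂ) : ℝ :=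
  (((Matrix.posSemidef_conjTranspose_mul_self A).1.eigenvectorUnitary.1 *
    Matrix.diagonal (((↑) : ℝ → ℂ) ∘ (√·) ∘ (Matrix.posSemidef_conjTranspose_mul_self A).1.eigenvalues) *
    (star (Matrix.posSemidef_conjTranspose_mul_self A).1.eigenvectorUnitary : Matrix m m ℂ)).trace).re

namespace Toric

/-- The axial-distance function `f` on generators: `f(p(r,s)) = ((−r) mod L) + ((−s) mod L) − 1`
for plaquettes and `f(v) = ((r−1) mod L) + ((s−1) mod L) − 1` for vertices `v = (r,s)`
(the values at the starred generators `p*`, `v*` are irrelevant below). -/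
def axf (L : ℕ) [NeZero L] : Gen L → ℤ
  | Sum.inl (r, s) => ((r - 1).val : ℤ) + ((s - 1).val : ℤ) - 1
  | Sum.inr (r, s) => ((-r).val : ℤ) + ((-s).val : ℤ) - 1

end Toric

theorem mul_list_prod_map_eq_smul {ι M G : Type*} [Monoid M] [Monoid G] [MulAction G M]
    [IsScalarTower G M M] [SMulCommClass G M M] (a : M) (f : ι → M) (ε : ι → G) (l : List ι)
    (h : ∀ i ∈ l, a * f i = ε i • (f i * a)) :
    a * (l.map f).prod = (l.map ε).prod • ((l.map f).prod * a) := by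
  induction l with
  | nil => simp
  | cons i l ih =>
    simp only [List.map_cons, List.prod_cons, List.forall_mem_cons] at h ⊢
    rw [← mul_assoc, h.1, smul_mul_assoc, mul_assoc, ih h.2, mul_smul_comm, mul_smul, mul_assoc]

theorem List.prod_map_ite_neg_one_of_nodup {α : Type*} [DecidableEq α] {l : List α}
    (hl : l.Nodup) (a : α) :
    (l.map fun x => if x = a then (-1 : ℤˣ) else 1).prod = if a ∈ l then -1 else 1 := by
  induction l with
  | nil => simp
  | cons x l ih =>
    obtain ⟨hx, hl⟩ := List.nodup_cons.mp hl
    by_cases hxa : x = a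
    · subst hxa; simp [hx, ih hl]
    · simp [hxa, ih hl, Ne.symm hxa]

theorem ite_smul_eq_neg_iff {A : Type*} [AddCommGroup A] [IsAddTorsionFree A] {x : A}
    (hx : x ≠ 0) (p : Prop) [Decidable p] : ((if p then (-1 : ℤˣ) else 1) • x = -x) ↔ p := by
  by_cases hp : p
  · simp [hp]
  · simpa [hp] using fun h => hx (self_eq_neg.mp h)

theorem Commute.mul_ne_neg_mul {R : Type*} [Ring R] [IsAddTorsionFree R] [Nontrivial R]
    {a b : R} (h : Commute a b) (ha : IsUnit a) (hb : IsUnit b) : a * b ≠ -(b * a) := by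
  rw [h.eq, ne_eq, self_eq_neg]
  exact (hb.mul ha).ne_zero

theorem ZMod.val_sub_one_add_one {n : ℕ} [Fact (1 < n)] {x : ZMod n} (hx : x ≠ 0) :
    (x - 1).val + 1 = x.val := by
  have hpos : 0 < x.val := Nat.pos_of_ne_zero ((ZMod.val_eq_zero x).not.mpr hx)
  rw [ZMod.val_sub (by rw [ZMod.val_one]; exact hpos), ZMod.val_one]
  omega

namespace Toric

section Lattice

variable {L : ℕ}

def starEdges (v : V L) : List (E L) := [(v, 0), (v, 1), (v - (1, 0), 0), (v - (0, 1), 1)]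

def plaquetteEdges (v : V L) : List (E L) := [(v, 0), (v, 1), (v + (1, 0), 1), (v + (0, 1), 0)]

variable [Fact (1 < L)]

theorem nodup_starEdges (v : V L) : (starEdges v).Nodup := by
  simp [starEdges, Prod.ext_iff, eq_sub_iff_add_eq]

theorem nodup_plaquetteEdges (v : V L) : (plaquetteEdges v).Nodup := by
  simp [plaquetteEdges, Prod.ext_iff]

end Lattice

variable {L : ℕ} [NeZero L]

instance : IsAddTorsionFree (Op L) := IsAddTorsionFree.of_module_rat _

theorem Xop_apply (e : E L) (σ τ : E L → Fin 2) :
    Xop L e σ τ = if τ = σ + Pi.single e 1 then 1 else 0 := by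
  have h : ∀ a : Fin 2, 1 - a = a + 1 := by decide
  simp only [Xop, funext_iff, Pi.add_apply, Pi.single_apply]
  congr 1
  refine propext ⟨fun ⟨he, hne⟩ x => ?_, fun hx => ⟨?_, fun x hxe => ?_⟩⟩
  · by_cases hxe : x = e
    · subst hxe; simp [he, h]
    · simp [hxe, hne x hxe]
  · simpa [h] using hx e
  · simpa [hxe] using hx x

theorem Xop_mul_apply (e : E L) (M : Op L) (σ τ : E L → Fin 2) :
    (Xop L e * M) σ τ = M (σ + Pi.single e 1) τ := by
  simp [Matrix.mul_apply, Xop_apply]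

theorem Xop_mul_self (e : E L) : Xop L e * Xop L e = 1 := by
  ext σ τ
  have h : (Pi.single e 1 + Pi.single e 1 : E L → Fin 2) = 0 := by
    rw [← Pi.single_add]; simp [show (1 + 1 : Fin 2) = 0 from rfl]
  simp [Xop_mul_apply, Xop_apply, add_assoc, h, Matrix.one_apply, eq_comm]

theorem Zop_mul_self (e : E L) : Zop L e * Zop L e = 1 := by
  simp [Zop, Matrix.diagonal_mul_diagonal, ← pow_add, Even.neg_one_pow ⟨_, rfl⟩]

theorem commute_Xop (e f : E L) : Commute (Xop L e) (Xop L f) := by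
  ext σ τ
  simp only [Xop_mul_apply, Xop_apply, add_right_comm]

theorem commute_Zop (e f : E L) : Commute (Zop L e) (Zop L f) :=
  Matrix.commute_diagonal _ _

theorem Xop_mul_Zop (e f : E L) :
    Xop L e * Zop L f = (if f = e then (-1 : ℤˣ) else 1) • (Zop L f * Xop L e) := by
  have h : ∀ a : Fin 2, (-1 : ℂ) ^ ((a + 1 : Fin 2) : ℕ) = -(-1) ^ (a : ℕ) := by
    intro a; fin_cases a <;> simp
  ext σ τ
  simp only [Zop, Matrix.mul_diagonal, Matrix.diagonal_mul, Matrix.smul_apply, Xop_apply]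
  by_cases hτ : τ = σ + Pi.single e 1 <;> by_cases hfe : f = e <;>
    simp [hτ, hfe, Units.smul_def, h]

theorem Zop_mul_Xop (e f : E L) :
    Zop L e * Xop L f = (if f = e then (-1 : ℤˣ) else 1) • (Xop L f * Zop L e) := by
  rw [Xop_mul_Zop, smul_smul]
  by_cases h : f = e
  · subst h; simp
  · simp [h, Ne.symm h]

theorem isUnit_Xop (e : E L) : IsUnit (Xop L e) := IsUnit.of_mul_eq_one _ (Xop_mul_self e)

theorem isUnit_Zop (e : E L) : IsUnit (Zop L e) := IsUnit.of_mul_eq_one _ (Zop_mul_self e)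

theorem Sv_eq_prod (v : V L) : Sv L v = ((starEdges v).map (Xop L)).prod := by
  simp [Sv, starEdges, mul_assoc]

theorem Sp_eq_prod (v : V L) : Sp L v = ((plaquetteEdges v).map (Zop L)).prod := by
  simp [Sp, plaquetteEdges, mul_assoc]

theorem isUnit_Sv (v : V L) : IsUnit (Sv L v) := by
  rw [Sv_eq_prod]
  exact List.prod_isUnit (List.forall_mem_map.2 fun e _ => isUnit_Xop e)

theorem isUnit_Sp (v : V L) : IsUnit (Sp L v) := by
  rw [Sp_eq_prod]
  exact List.prod_isUnit (List.forall_mem_map.2 fun e _ => isUnit_Zop e)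

theorem isUnit_stab : (j : Gen L) → IsUnit (stab L j)
  | .inl v => isUnit_Sv v
  | .inr v => isUnit_Sp v

theorem commute_Xop_Sv (e : E L) (v : V L) : Commute (Xop L e) (Sv L v) := by
  rw [Sv_eq_prod]
  exact Commute.list_prod_right _ _ (List.forall_mem_map.2 fun f _ => commute_Xop e f)

theorem commute_Zop_Sp (e : E L) (v : V L) : Commute (Zop L e) (Sp L v) := by
  rw [Sp_eq_prod]
  exact Commute.list_prod_right _ _ (List.forall_mem_map.2 fun f _ => commute_Zop e f)

theorem corr_inl_of_snd_ne_one {r s : ZMod L} (hs : s ≠ 1) :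
    corr L (.inl (r, s)) = Zop L ((r, s - 1), 1) := by
  simp [corr, hs]

theorem corr_inl_mk_one {r : ZMod L} (hr : r ≠ 1) :
    corr L (.inl (r, 1)) = Zop L ((r - 1, 1), 0) := by
  simp [corr, hr]

theorem corr_inr_of_snd_ne_zero {r s : ZMod L} (hs : s ≠ 0) :
    corr L (.inr (r, s)) = Xop L ((r, s + 1), 0) := by
  simp [corr, hs]

theorem corr_inr_mk_zero {r : ZMod L} (hr : r ≠ 0) :
    corr L (.inr (r, 0)) = Xop L ((r + 1, 0), 1) := by
  simp [corr, hr]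

theorem corr_mul_stab_ne_of_starred {k : Gen L} (hk : k = pStar L ∨ k = vStar L) (j : Gen L) :
    corr L k * stab L j ≠ -(stab L j * corr L k) := by
  have hc : corr L k = 1 := by rcases hk with rfl | rfl <;> simp [corr, pStar, vStar]
  simpa [hc] using (Commute.one_left (stab L j)).mul_ne_neg_mul isUnit_one (isUnit_stab j)

variable [Fact (1 < L)]

theorem Xop_mul_Sp (e : E L) (v : V L) :
    Xop L e * Sp L v = (if e ∈ plaquetteEdges v then (-1 : ℤˣ) else 1) • (Sp L v * Xop L e) := by
  rw [Sp_eq_prod, mul_list_prod_map_eq_smul _ _ _ _ fun f _ => Xop_mul_Zop e f,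
    List.prod_map_ite_neg_one_of_nodup (nodup_plaquetteEdges v)]
  -- the two sides differ only in the instance deciding `e ∈ _`
  congr

theorem Zop_mul_Sv (e : E L) (v : V L) :
    Zop L e * Sv L v = (if e ∈ starEdges v then (-1 : ℤˣ) else 1) • (Sv L v * Zop L e) := by
  rw [Sv_eq_prod, mul_list_prod_map_eq_smul _ _ _ _ fun f _ => Zop_mul_Xop e f,
    List.prod_map_ite_neg_one_of_nodup (nodup_starEdges v)]
  congr

theorem Xop_anticomm_stab_iff (e : E L) (j : Gen L) :
    Xop L e * stab L j = -(stab L j * Xop L e) ↔ ∃ v, j = .inr v ∧ e ∈ plaquetteEdges v := by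
  rcases j with v | v
  · simpa [stab] using (commute_Xop_Sv e v).mul_ne_neg_mul (isUnit_Xop e) (isUnit_Sv v)
  · rw [stab, Xop_mul_Sp, ite_smul_eq_neg_iff ((isUnit_Sp v).mul (isUnit_Xop e)).ne_zero]
    simp

theorem Zop_anticomm_stab_iff (e : E L) (j : Gen L) :
    Zop L e * stab L j = -(stab L j * Zop L e) ↔ ∃ v, j = .inl v ∧ e ∈ starEdges v := by
  rcases j with v | v
  · rw [stab, Zop_mul_Sv, ite_smul_eq_neg_iff ((isUnit_Sv v).mul (isUnit_Zop e)).ne_zero]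
    simp
  · simpa [stab] using (commute_Zop_Sp e v).mul_ne_neg_mul (isUnit_Zop e) (isUnit_Sp v)

theorem exists_anticomm_corr_inl (v : V L) (hv : v ≠ (1, 1)) :
    ∃ k, axf L (.inl v) = axf L k + 1 ∧ ∀ j,
      corr L (.inl v) * stab L j = -(stab L j * corr L (.inl v)) ↔ j = .inl v ∨ j = k := by
  obtain ⟨r, s⟩ := v
  by_cases hs : s = 1
  · subst hs
    have hr : r ≠ 1 := by rintro rfl; exact hv rfl
    refine ⟨.inl (r - 1, 1), ?_, fun j => ?_⟩
    · have := ZMod.val_sub_one_add_one (sub_ne_zero.2 hr)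
      simp only [axf]; omega
    · rw [corr_inl_mk_one hr, Zop_anticomm_stab_iff]
      simp [starEdges, and_or_left, exists_or, or_comm]
  · refine ⟨.inl (r, s - 1), ?_, fun j => ?_⟩
    · have := ZMod.val_sub_one_add_one (sub_ne_zero.2 hs)
      simp only [axf]; omega
    · rw [corr_inl_of_snd_ne_one hs, Zop_anticomm_stab_iff]
      simp [starEdges, and_or_left, exists_or, or_comm]

theorem exists_anticomm_corr_inr (v : V L) (hv : v ≠ (0, 0)) :
    ∃ k, axf L (.inr v) = axf L k + 1 ∧ ∀ j,
      corr L (.inr v) * stab L j = -(stab L j * corr L (.inr v)) ↔ j = .inr v ∨ j = k := by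
  obtain ⟨r, s⟩ := v
  by_cases hs : s = 0
  · subst hs
    have hr : r ≠ 0 := by rintro rfl; exact hv rfl
    refine ⟨.inr (r + 1, 0), ?_, fun j => ?_⟩
    · have := ZMod.val_sub_one_add_one (neg_ne_zero.2 hr)
      simp only [axf, neg_add']; omega
    · rw [corr_inr_mk_zero hr, Xop_anticomm_stab_iff]
      simp [plaquetteEdges, and_or_left, exists_or, or_comm]
  · refine ⟨.inr (r, s + 1), ?_, fun j => ?_⟩
    · have := ZMod.val_sub_one_add_one (neg_ne_zero.2 hs)
      simp only [axf, neg_add']; omega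
    · rw [corr_inr_of_snd_ne_zero hs, Xop_anticomm_stab_iff]
      simp [plaquetteEdges, and_or_left, exists_or, or_comm]

theorem exists_anticomm_corr (k : Gen L) (hp : k ≠ pStar L) (hv : k ≠ vStar L) :
    ∃ k', axf L k = axf L k' + 1 ∧ ∀ j,
      corr L k * stab L j = -(stab L j * corr L k) ↔ j = k ∨ j = k' := by
  rcases k with v | v
  · exact exists_anticomm_corr_inl v fun h => hv (by rw [h]; rfl)
  · exact exists_anticomm_corr_inr v fun h => hp (by rw [h]; rfl)

end Toric

open Toric in
/-- (a) each non-starred correction anticommutes with its own stabilizer;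
(b) if `C_k` anticommutes with `S_j` (for non-starred `k ≠ j`) then `f(k) ≥ f(j) + 1`;
(c) each correction `C_k` anticommutes with at most one stabilizer `S_j`, `j ≠ k`
(i.e. `m = 1` for the toric code). -/
theorem toric_code_excitation_transport
    (L : ℕ) [NeZero L] (hL : 2 ≤ L) :
    (∀ j : Gen L, j ≠ pStar L → j ≠ vStar L →
      corr L j * stab L j = -(stab L j * corr L j)) ∧
    (∀ j k : Gen L, j ≠ pStar L → j ≠ vStar L → k ≠ pStar L → k ≠ vStar L → k ≠ j →
      corr L k * stab L j = -(stab L j * corr L k) → axf L j + 1 ≤ axf L k) ∧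
    (∀ k j j' : Gen L, j ≠ k → j' ≠ k →
      corr L k * stab L j = -(stab L j * corr L k) →
      corr L k * stab L j' = -(stab L j' * corr L k) → j = j') := by
  have : Fact (1 < L) := ⟨hL⟩
  refine ⟨fun j hp hv => ?_, fun j k _ _ hp hv hkj h => ?_, fun k j j' hj hj' h h' => ?_⟩
  · obtain ⟨_, -, hk⟩ := exists_anticomm_corr j hp hv
    exact (hk j).2 (Or.inl rfl)
  · obtain ⟨k', hf, hk⟩ := exists_anticomm_corr k hp hv
    obtain rfl := ((hk j).1 h).resolve_left hkj.symm
    exact hf.ge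
  · by_cases hstar : k = pStar L ∨ k = vStar L
    · exact absurd h (corr_mul_stab_ne_of_starred hstar j)
    · rw [not_or] at hstar
      obtain ⟨k', -, hk⟩ := exists_anticomm_corr k hstar.1 hstar.2
      rw [((hk j).1 h).resolve_left hj, ((hk j').1 h').resolve_left hj']
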